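/- Let A be a strictly positive operator on H and T ∈ B_A(H). Then (1/4)‖TT^{♯A} + T^{♯A}T‖_A ≤ w_A(T)² ≤ (1/2)‖TT^{♯A} + T^{♯A}T‖_A. -/

import Mathlib

noncomputable section
open Complex ContinuousLinearMap

variable {H : Type*} [NormedAddCommGroup H] [InnerProductSpace ℂ H] [CompleteSpace H]

/-- The `A`-inner product `⟨x,y⟩_A = ⟨Ax,y⟩`. -/
def innA (A : H →L[ℂ] H) (x y : H) : ℂ := inner ℂ (A x) y

/-- The `A`-seminorm of a vector, `‖x‖_A = √⟨x,x⟩_A`. -/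
def vnormA (A : H →L[ℂ] H) (x : H) : ℝ := Real.sqrt (innA A x x).re

/-- The `A`-numerical radius `w_A(T) = sup{|⟨Tx,x⟩_A| : ‖x‖_A = 1}`. -/
def wA (A T : H →L[ℂ] H) : ℝ :=
  sSup {r : ℝ | ∃ x : H, vnormA A x = 1 ∧ r = ‖innA A (T x) x‖}

/-- The `A`-operator seminorm, `sup` over `A`-unit vectors in the closure of the range of `A`. -/
def opNormA (A T : H →L[ℂ] H) : ℝ :=
  sSup {r : ℝ | ∃ x : H, x ∈ closure (Set.range A) ∧ vnormA A x = 1 ∧ r = vnormA A (T x)}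

/-- The `A`-operator seminorm, `sup` over all `A`-unit vectors (used when `A > 0`). -/
def opNormA' (A T : H →L[ℂ] H) : ℝ :=
  sSup {r : ℝ | ∃ x : H, vnormA A x = 1 ∧ r = vnormA A (T x)}

/-- The `A`-Crawford number `c_A(T) = inf{|⟨Tx,x⟩_A| : ‖x‖_A = 1}`. -/
def cA (A T : H →L[ℂ] H) : ℝ :=
  sInf {r : ℝ | ∃ x : H, vnormA A x = 1 ∧ r = ‖innA A (T x) x‖}

/-- The `A`-minimum modulus `m_A(T) = inf{‖Tx‖_A : ‖x‖_A = 1}` (version for `A > 0`). -/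
def mA (A T : H →L[ℂ] H) : ℝ :=
  sInf {r : ℝ | ∃ x : H, vnormA A x = 1 ∧ r = vnormA A (T x)}

/-- `S` is an `A`-adjoint of `T`, i.e. `A S = T* A`. -/
def IsAAdjoint (A T S : H →L[ℂ] H) : Prop :=
  A.comp S = (ContinuousLinearMap.adjoint T).comp A

/-- `A` is strictly positive: positive and `⟨Ax,x⟩ > 0` for all `x ≠ 0`. -/
def StrictPos (A : H →L[ℂ] H) : Prop :=
  A.IsPositive ∧ ∀ x : H, x ≠ 0 → 0 < (innA A x x).re

/-- The inner product on `H ⊕ H`. -/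
def inn2 (u v : H × H) : ℂ := inner ℂ u.1 v.1 + inner ℂ u.2 v.2

/-- `B = diag(A, A)` acting on `H ⊕ H`. -/
def Bop (A : H →L[ℂ] H) : H × H →L[ℂ] H × H := A.prodMap A

/-- The `B`-seminorm on `H ⊕ H`. -/
def vnormB (A : H →L[ℂ] H) (u : H × H) : ℝ := Real.sqrt (inn2 (Bop A u) u).re

/-- The `B`-numerical radius on `H ⊕ H`, where `B = diag(A, A)`. -/
def wB (A : H →L[ℂ] H) (S : H × H →L[ℂ] H × H) : ℝ :=
  sSup {r : ℝ | ∃ u : H × H, vnormB A u = 1 ∧ r = ‖inn2 (Bop A (S u)) u‖}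

/-- The `2 × 2` operator matrix `[[X, Y], [Z, W]]` acting on `H ⊕ H`. -/
def blk (X Y Z W : H →L[ℂ] H) : H × H →L[ℂ] H × H :=
  ((X.comp (ContinuousLinearMap.fst ℂ H H)) + (Y.comp (ContinuousLinearMap.snd ℂ H H))).prod
    ((Z.comp (ContinuousLinearMap.fst ℂ H H)) + (W.comp (ContinuousLinearMap.snd ℂ H H)))


/-!
`⟨x, y⟩_A = ⟨A x, y⟩` is a genuine, though in general incomplete, inner product on `H`. An
operator `T` with an `A`-adjoint `S` is bounded for it: for the `A`-symmetric `R = S T`,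
Cauchy–Schwarz gives `‖R x‖_A ^ (2 ^ m) ≤ ‖x‖_A ^ (2 ^ m - 1) ‖R ^ (2 ^ m) x‖_A`, and the right
side grows at most like `‖R‖ ^ (2 ^ m)`, so `‖R x‖_A ≤ ‖R‖ ‖x‖_A`; then `‖T x‖_A² = ⟨R x, x⟩_A`.
Both bounds are then Kittaneh's argument in an arbitrary inner product space where
`⟨T x, y⟩ = ⟨x, S y⟩`: `|⟨T x, x⟩|² ≤ ‖T x‖ ‖S x‖ ≤ ½ ⟨(T S + S T) x, x⟩`, and
`T S + S T = 2 (Re T)² + 2 (Im T)²` where the symmetric operators `Re T`, `Im T` have norm equal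
to their numerical radius, which is at most `w(T)`.
-/

end

open ContinuousLinearMap

theorem le_of_forall_pow_two_pow_le_mul_pow {a b K : ℝ} (hb : 0 ≤ b)
    (h : ∀ m : ℕ, a ^ 2 ^ m ≤ K * b ^ 2 ^ m) : a ≤ b := by
  by_contra! hba
  rcases hb.eq_or_lt with rfl | hb
  · have h0 := h 0
    simp only [pow_zero, pow_one, mul_zero] at h0
    linarith
  have hq : 1 < a / b := (one_lt_div hb).2 hba
  obtain ⟨n, hn⟩ := pow_unbounded_of_one_lt K hq
  have hpow : (a / b) ^ n ≤ (a / b) ^ 2 ^ n := pow_le_pow_right₀ hq.le n.lt_two_pow_self.le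
  have hK : (a / b) ^ 2 ^ n ≤ K := by
    rw [div_pow, div_le_iff₀ (by positivity)]
    exact h n
  linarith

section Adjoint

variable {𝕜 E : Type*} [RCLike 𝕜] [NormedAddCommGroup E] [InnerProductSpace 𝕜 E] {T S : E → E}
  (hTS : ∀ x y, inner 𝕜 (T x) y = inner 𝕜 x (S y))
include hTS

theorem inner_apply_eq_of_adjoint (x y : E) : inner 𝕜 (S x) y = inner 𝕜 x (T y) := by
  rw [← inner_conj_symm, ← hTS, inner_conj_symm]

theorem norm_apply_sq_le_of_adjoint (x : E) : ‖T x‖ ^ 2 ≤ ‖S (T x)‖ * ‖x‖ := by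
  rw [norm_sq_eq_re_inner (𝕜 := 𝕜), hTS, mul_comm]
  exact (RCLike.re_le_norm _).trans (norm_inner_le_norm _ _)

end Adjoint

namespace LinearMap.IsSymmetric

variable {𝕜 E : Type*} [RCLike 𝕜] [NormedAddCommGroup E] [InnerProductSpace 𝕜 E]
  {R : E →ₗ[𝕜] E} (hR : R.IsSymmetric)
include hR

theorem norm_pow_apply_sq_le (k : ℕ) (x : E) :
    ‖(R ^ k) x‖ ^ 2 ≤ ‖x‖ * ‖(R ^ (2 * k)) x‖ := by
  rw [norm_sq_eq_re_inner (𝕜 := 𝕜), hR.pow k, ← Module.End.mul_apply, ← pow_add, ← two_mul]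
  exact (RCLike.re_le_norm _).trans (norm_inner_le_norm _ _)

theorem norm_apply_pow_two_pow_le (x : E) (m : ℕ) :
    ‖R x‖ ^ 2 ^ m ≤ ‖x‖ ^ (2 ^ m - 1) * ‖(R ^ 2 ^ m) x‖ := by
  induction m with
  | zero => simp
  | succ m ih =>
    have hexp : 2 ^ (m + 1) - 1 = 2 * (2 ^ m - 1) + 1 := by
      have := Nat.one_le_two_pow (n := m)
      rw [pow_succ]
      omega
    calc ‖R x‖ ^ 2 ^ (m + 1) = (‖R x‖ ^ 2 ^ m) ^ 2 := by rw [pow_succ, pow_mul]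
      _ ≤ (‖x‖ ^ (2 ^ m - 1) * ‖(R ^ 2 ^ m) x‖) ^ 2 := by gcongr
      _ ≤ (‖x‖ ^ (2 ^ m - 1)) ^ 2 * (‖x‖ * ‖(R ^ (2 * 2 ^ m)) x‖) := by
        rw [mul_pow]
        gcongr
        exact hR.norm_pow_apply_sq_le _ x
      _ = ‖x‖ ^ (2 ^ (m + 1) - 1) * ‖(R ^ 2 ^ (m + 1)) x‖ := by
        rw [hexp, pow_succ 2 m, mul_comm (2 ^ m) 2, pow_succ _ (2 * _), pow_mul]
        ring

theorem norm_apply_le_of_norm_pow_apply_le {x : E} {C c : ℝ} (hc : 0 ≤ c)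
    (h : ∀ n, ‖(R ^ n) x‖ ≤ C * c ^ n) : ‖R x‖ ≤ c * ‖x‖ := by
  rcases (norm_nonneg x).eq_or_lt with hx | hx
  · rw [← hx, norm_eq_zero.1 hx.symm, map_zero, norm_zero, mul_zero]
  refine le_of_forall_pow_two_pow_le_mul_pow (by positivity) (K := C / ‖x‖) fun m => ?_
  calc ‖R x‖ ^ 2 ^ m ≤ ‖x‖ ^ (2 ^ m - 1) * (C * c ^ 2 ^ m) :=
        (hR.norm_apply_pow_two_pow_le x m).trans (by gcongr; exact h _)
    _ = C / ‖x‖ * (c * ‖x‖) ^ 2 ^ m := by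
      rw [mul_pow, pow_sub₀ _ hx.ne' Nat.one_le_two_pow]
      field_simp

end LinearMap.IsSymmetric

open Complex in
theorem mul_add_mul_eq_two_smul_sq_add_sq {R : Type*} [Ring R] [Algebra ℂ R] (x y : R) :
    x * y + y * x = (2 : ℂ) • ((2⁻¹ : ℂ) • (x + y) * (2⁻¹ : ℂ) • (x + y) +
      (I / 2) • (y - x) * (I / 2) • (y - x)) := by
  simp only [smul_mul_smul_comm, mul_add, add_mul, mul_sub, sub_mul]
  match_scalars <;> ring_nf <;> simp only [I_sq] <;> norm_num

namespace ContinuousLinearMap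

theorem sSup_norm_apply_eq_norm {𝕜 E F : Type*} [RCLike 𝕜] [NormedAddCommGroup E]
    [NormedSpace 𝕜 E] [NormedAddCommGroup F] [NormedSpace 𝕜 F] (f : E →L[𝕜] F) :
    sSup {r : ℝ | ∃ x : E, ‖x‖ = 1 ∧ r = ‖f x‖} = ‖f‖ := by
  rw [← f.sSup_sphere_eq_norm]
  congr 1
  ext r
  simp [eq_comm]

section NumericalRadius

variable {𝕜 E : Type*} [RCLike 𝕜] [NormedAddCommGroup E] [InnerProductSpace 𝕜 E]

noncomputable def numericalRadius (T : E →L[𝕜] E) : ℝ :=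
  sSup {r : ℝ | ∃ x : E, ‖x‖ = 1 ∧ r = ‖inner 𝕜 (T x) x‖}

variable (T : E →L[𝕜] E)

theorem numericalRadius_nonneg : 0 ≤ T.numericalRadius :=
  Real.sSup_nonneg <| by rintro r ⟨x, -, rfl⟩; exact norm_nonneg _

theorem numericalRadius_le {w : ℝ} (hw : 0 ≤ w) (h : ∀ x, ‖x‖ = 1 → ‖inner 𝕜 (T x) x‖ ≤ w) :
    T.numericalRadius ≤ w :=
  Real.sSup_le (by rintro r ⟨x, hx, rfl⟩; exact h x hx) hw

theorem norm_inner_apply_self_le_numericalRadius_mul (x : E) :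
    ‖inner 𝕜 (T x) x‖ ≤ T.numericalRadius * ‖x‖ ^ 2 := by
  rcases eq_or_ne x 0 with rfl | hx
  · simp
  have hbdd : BddAbove {r : ℝ | ∃ x : E, ‖x‖ = 1 ∧ r = ‖inner 𝕜 (T x) x‖} := by
    refine ⟨‖T‖, ?_⟩
    rintro r ⟨y, hy, rfl⟩
    simpa [hy] using (norm_inner_le_norm (𝕜 := 𝕜) (T y) y).trans
      (mul_le_mul_of_nonneg_right (T.le_opNorm y) (norm_nonneg y))
  set u : E := (‖x‖⁻¹ : 𝕜) • x
  have hu : ‖u‖ = 1 := by simp [u, norm_smul, hx]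
  have hle : ‖inner 𝕜 (T u) u‖ ≤ T.numericalRadius := le_csSup hbdd ⟨u, hu, rfl⟩
  have hscale : ‖inner 𝕜 (T u) u‖ = ‖inner 𝕜 (T x) x‖ / ‖x‖ ^ 2 := by
    simp only [u, map_smul, inner_smul_right, inner_smul_left, map_inv₀, RCLike.conj_ofReal,
      norm_mul, norm_inv, norm_algebraMap', norm_norm]
    field_simp
  rwa [hscale, div_le_iff₀ (by positivity)] at hle

theorem norm_le_of_isSymmetric {R : E →L[𝕜] E} (hR : (R : E →ₗ[𝕜] E).IsSymmetric) {w : ℝ}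
    (hw : 0 ≤ w) (h : ∀ x, |RCLike.re (inner 𝕜 (R x) x)| ≤ w * ‖x‖ ^ 2) : ‖R‖ ≤ w := by
  rw [R.norm_eq_iSup_rayleighQuotient hR]
  refine ciSup_le fun x => ?_
  rcases eq_or_ne x 0 with rfl | hx
  · simpa using hw
  rw [rayleighQuotient, reApplyInnerSelf_apply, abs_div, abs_sq, div_le_iff₀ (by positivity)]
  exact h x

end NumericalRadius

section Kittaneh

open Complex

variable {E : Type*} [NormedAddCommGroup E] [InnerProductSpace ℂ E] {T S : E →L[ℂ] E}
  (hTS : ∀ x y, inner ℂ (T x) y = inner ℂ x (S y))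
include hTS

theorem isSymmetric_realPart : ((2⁻¹ : ℂ) • (T + S) : E →ₗ[ℂ] E).IsSymmetric := fun x y => by
  simp only [smul_add, LinearMap.add_apply, LinearMap.smul_apply, coe_coe, inner_add_left,
    inner_add_right, inner_smul_left, inner_smul_right, map_inv₀, conj_ofNat, hTS,
    inner_apply_eq_of_adjoint hTS]
  ring

theorem isSymmetric_imagPart : ((I / 2) • (S - T) : E →ₗ[ℂ] E).IsSymmetric := fun x y => by
  simp only [LinearMap.smul_apply, LinearMap.sub_apply, coe_coe, inner_sub_left, inner_sub_right,
    inner_smul_left, inner_smul_right, map_div₀, conj_I, conj_ofNat, hTS,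
    inner_apply_eq_of_adjoint hTS]
  ring

theorem re_inner_realPart_apply_self (x : E) :
    (inner ℂ (((2⁻¹ : ℂ) • (T + S)) x) x).re = (inner ℂ (T x) x).re := by
  rw [smul_apply, add_apply, inner_smul_left, inner_add_left, inner_apply_eq_of_adjoint hTS,
    ← inner_conj_symm x (T x), add_conj]
  simp

theorem re_inner_imagPart_apply_self (x : E) :
    (inner ℂ (((I / 2) • (S - T)) x) x).re = -(inner ℂ (T x) x).im := by
  rw [smul_apply, sub_apply, inner_smul_left, inner_sub_left, inner_apply_eq_of_adjoint hTS,
    ← inner_conj_symm x (T x), ← neg_sub, sub_conj, map_div₀, conj_I, map_ofNat]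
  push_cast
  ring_nf
  simp

theorem numericalRadius_sq_le_half_norm_mul_add_mul :
    T.numericalRadius ^ 2 ≤ ‖T * S + S * T‖ / 2 := by
  have hunit (x : E) (hx : ‖x‖ = 1) : ‖inner ℂ (T x) x‖ ^ 2 ≤ ‖T * S + S * T‖ / 2 := by
    have hT : ‖inner ℂ (T x) x‖ ≤ ‖T x‖ := by
      simpa [hx] using norm_inner_le_norm (𝕜 := ℂ) (T x) x
    have hS : ‖inner ℂ (T x) x‖ ≤ ‖S x‖ := by
      simpa [hTS, hx] using norm_inner_le_norm (𝕜 := ℂ) x (S x)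
    have hsum : ‖T x‖ ^ 2 + ‖S x‖ ^ 2 = RCLike.re (inner ℂ ((T * S + S * T) x) x) := by
      rw [norm_sq_eq_re_inner (𝕜 := ℂ), norm_sq_eq_re_inner (𝕜 := ℂ), add_apply,
        mul_apply_eq_comp, mul_apply_eq_comp, inner_add_left, hTS (S x),
        inner_apply_eq_of_adjoint hTS (T x), map_add, add_comm]
    have hD : RCLike.re (inner ℂ ((T * S + S * T) x) x) ≤ ‖T * S + S * T‖ :=
      calc _ ≤ ‖inner ℂ ((T * S + S * T) x) x‖ := RCLike.re_le_norm _
        _ ≤ ‖(T * S + S * T) x‖ := by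
          simpa only [hx, mul_one] using norm_inner_le_norm (𝕜 := ℂ) ((T * S + S * T) x) x
        _ ≤ ‖T * S + S * T‖ := by simpa [hx] using le_opNorm (T * S + S * T) x
    nlinarith [sq_nonneg (‖T x‖ - ‖S x‖), norm_nonneg (inner ℂ (T x) x)]
  have hw : T.numericalRadius ≤ √(‖T * S + S * T‖ / 2) :=
    numericalRadius_le T (Real.sqrt_nonneg _) fun x hx => Real.le_sqrt_of_sq_le (hunit x hx)
  exact (Real.le_sqrt (numericalRadius_nonneg T) (by positivity)).1 hw

theorem norm_mul_add_mul_le_four_mul_numericalRadius_sq :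
    ‖T * S + S * T‖ ≤ 4 * T.numericalRadius ^ 2 := by
  set w := T.numericalRadius
  have hw : 0 ≤ w := numericalRadius_nonneg T
  have hRe : ‖(2⁻¹ : ℂ) • (T + S)‖ ≤ w :=
    norm_le_of_isSymmetric (isSymmetric_realPart hTS) hw fun x => by
      rw [RCLike.re_to_complex, re_inner_realPart_apply_self hTS]
      exact (abs_re_le_norm _).trans (norm_inner_apply_self_le_numericalRadius_mul T x)
  have hIm : ‖(I / 2) • (S - T)‖ ≤ w :=
    norm_le_of_isSymmetric (isSymmetric_imagPart hTS) hw fun x => by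
      rw [RCLike.re_to_complex, re_inner_imagPart_apply_self hTS, abs_neg]
      exact (abs_im_le_norm _).trans (norm_inner_apply_self_le_numericalRadius_mul T x)
  calc ‖T * S + S * T‖
      ≤ 2 * (‖(2⁻¹ : ℂ) • (T + S)‖ * ‖(2⁻¹ : ℂ) • (T + S)‖ +
          ‖(I / 2) • (S - T)‖ * ‖(I / 2) • (S - T)‖) := by
        grw [mul_add_mul_eq_two_smul_sq_add_sq, norm_smul, norm_add_le, norm_mul_le, norm_mul_le]
        simp
    _ ≤ 2 * (w * w + w * w) := by gcongr
    _ = 4 * w ^ 2 := by ring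

end Kittaneh

end ContinuousLinearMap

section AInnerProduct

variable {H : Type*} [NormedAddCommGroup H] [InnerProductSpace ℂ H]

theorem StrictPos.isSymmetric {A : H →L[ℂ] H} (hA : StrictPos A) :
    (A : H →ₗ[ℂ] H).IsSymmetric :=
  hA.1.isSymmetric

theorem vnormA_le (A : H →L[ℂ] H) (x : H) : vnormA A x ≤ √‖A‖ * ‖x‖ := by
  rw [vnormA, ← Real.sqrt_sq (norm_nonneg x), ← Real.sqrt_mul (norm_nonneg A)]
  refine Real.sqrt_le_sqrt ((Complex.re_le_norm _).trans ?_)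
  calc ‖innA A x x‖ ≤ ‖A x‖ * ‖x‖ := norm_inner_le_norm _ _
    _ ≤ ‖A‖ * ‖x‖ * ‖x‖ := by gcongr; exact A.le_opNorm x
    _ = ‖A‖ * ‖x‖ ^ 2 := by ring

theorem innA_conj_symm {A : H →L[ℂ] H} (hA : (A : H →ₗ[ℂ] H).IsSymmetric) (x y : H) :
    starRingEnd ℂ (innA A y x) = innA A x y := by
  rw [innA, innA, show inner ℂ (A y) x = inner ℂ y (A x) from hA y x, inner_conj_symm]

theorem innA_add_left (A : H →L[ℂ] H) (x y z : H) :
    innA A (x + y) z = innA A x z + innA A y z := by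
  rw [innA, map_add, inner_add_left, innA, innA]

theorem innA_smul_left (A : H →L[ℂ] H) (x y : H) (r : ℂ) :
    innA A (r • x) y = starRingEnd ℂ r * innA A x y := by
  rw [innA, map_smul, inner_smul_left, innA]

/-- A copy of `H` carrying the inner product `innA A`. It is an inner product space as soon as `A`
is strictly positive, but usually not a complete one, so adjoints are handled by hand. -/
def WithA (_A : H →L[ℂ] H) : Type _ := H

namespace WithA

variable (A : H →L[ℂ] H)

instance : AddCommGroup (WithA A) := inferInstanceAs (AddCommGroup H)

instance : Module ℂ (WithA A) := inferInstanceAs (Module ℂ H)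

noncomputable section

def equiv : H ≃ₗ[ℂ] WithA A := LinearEquiv.refl ℂ H

def op : (H →L[ℂ] H) →+* Module.End ℂ (WithA A) := ContinuousLinearMap.toLinearMapRingHom

variable [hA : Fact (StrictPos A)]

instance innerProductSpaceCore : InnerProductSpace.Core ℂ (WithA A) where
  inner x y := innA A x y
  conj_inner_symm := innA_conj_symm (H := H) hA.out.isSymmetric
  re_inner_nonneg := hA.out.1.2
  add_left := innA_add_left A
  smul_left := innA_smul_left A
  definite x hx := by
    by_contra hx0
    simpa [hx] using hA.out.2 x hx0

instance : NormedAddCommGroup (WithA A) :=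
  InnerProductSpace.Core.toNormedAddCommGroup (𝕜 := ℂ)

instance : InnerProductSpace ℂ (WithA A) :=
  InnerProductSpace.ofCore (innerProductSpaceCore A).toCore

theorem norm_op_apply_le_of_isSymmetric {R : H →L[ℂ] H} (hR : (op A R).IsSymmetric)
    (x : WithA A) : ‖op A R x‖ ≤ ‖R‖ * ‖x‖ := by
  refine hR.norm_apply_le_of_norm_pow_apply_le (norm_nonneg R)
    (C := √‖A‖ * ‖(equiv A).symm x‖) fun n => ?_
  calc ‖(op A R ^ n) x‖ = vnormA A ((R ^ n) ((equiv A).symm x)) := by rw [← map_pow]; rfl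
    _ ≤ √‖A‖ * ‖(R ^ n) ((equiv A).symm x)‖ := vnormA_le A _
    _ ≤ √‖A‖ * (‖R‖ ^ n * ‖(equiv A).symm x‖) := by
      gcongr
      rcases n with _ | n
      · simp
      · exact ((R ^ (n + 1)).le_opNorm _).trans (by gcongr; exact norm_pow_le' R n.succ_pos)
    _ = √‖A‖ * ‖(equiv A).symm x‖ * ‖R‖ ^ n := by ring

variable {A} {T S : H →L[ℂ] H} (hTS : ∀ x y, innA A (T x) y = innA A x (S y))
include hTS

theorem inner_op_apply (x y : WithA A) : inner ℂ (op A T x) y = inner ℂ x (op A S y) :=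
  hTS x y

theorem isSymmetric_op_mul : (op A (S * T)).IsSymmetric := fun x y => by
  rw [map_mul, Module.End.mul_apply, Module.End.mul_apply,
    inner_apply_eq_of_adjoint (inner_op_apply hTS), inner_op_apply hTS]

theorem norm_op_apply_le (x : WithA A) : ‖op A T x‖ ≤ √‖S * T‖ * ‖x‖ := by
  have hsq : ‖op A T x‖ ^ 2 ≤ ‖S * T‖ * ‖x‖ ^ 2 :=
    calc ‖op A T x‖ ^ 2 ≤ ‖op A S (op A T x)‖ * ‖x‖ :=
          norm_apply_sq_le_of_adjoint (inner_op_apply hTS) x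
      _ ≤ ‖S * T‖ * ‖x‖ * ‖x‖ := by
        gcongr
        exact norm_op_apply_le_of_isSymmetric A (isSymmetric_op_mul hTS) x
      _ = ‖S * T‖ * ‖x‖ ^ 2 := by ring
  rw [← Real.sqrt_sq (norm_nonneg x), ← Real.sqrt_mul (norm_nonneg _)]
  exact Real.le_sqrt_of_sq_le hsq

def opCLM : WithA A →L[ℂ] WithA A := (op A T).mkContinuous _ (norm_op_apply_le hTS)

end

end WithA

end AInnerProduct

theorem IsAAdjoint.innA_apply_left {H : Type*} [NormedAddCommGroup H] [InnerProductSpace ℂ H]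
    [CompleteSpace H] {A T S : H →L[ℂ] H} (hA : (A : H →ₗ[ℂ] H).IsSymmetric)
    (h : IsAAdjoint A T S) (x y : H) : innA A (T x) y = innA A x (S y) := by
  have hAS : A (S y) = adjoint T (A y) := DFunLike.congr_fun h y
  rw [innA, innA, show inner ℂ (A (T x)) y = inner ℂ (T x) (A y) from hA (T x) y,
    show inner ℂ (A x) (S y) = inner ℂ x (A (S y)) from hA x (S y), hAS, adjoint_inner_right]

variable {H : Type*} [NormedAddCommGroup H] [InnerProductSpace ℂ H] [CompleteSpace H]

theorem stmt10 (A T S : H →L[ℂ] H) (hA : StrictPos A) (hS : IsAAdjoint A T S) :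
    (1/4) * opNormA' A (T * S + S * T) ≤ (wA A T)^2 ∧
    (wA A T)^2 ≤ (1/2) * opNormA' A (T * S + S * T) := by
  have : Fact (StrictPos A) := ⟨hA⟩
  have hTS := hS.innA_apply_left hA.isSymmetric
  have hST : ∀ x y, innA A (S x) y = innA A x (T y) :=
    inner_apply_eq_of_adjoint (WithA.inner_op_apply hTS)
  set T' := WithA.opCLM hTS
  set S' := WithA.opCLM hST
  have hT'S' : ∀ x y, inner ℂ (T' x) y = inner ℂ x (S' y) := hTS
  have hw : wA A T = T'.numericalRadius := rfl
  have hn : opNormA' A (T * S + S * T) = ‖T' * S' + S' * T'‖ :=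
    (T' * S' + S' * T').sSup_norm_apply_eq_norm
  rw [hw, hn]
  constructor
  · linarith [norm_mul_add_mul_le_four_mul_numericalRadius_sq hT'S']
  · linarith [numericalRadius_sq_le_half_norm_mul_add_mul hT'S']
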